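/- arXiv:2108.11431 — 2 statements merged into one kernel-verified Lean document; each statement's English description precedes it below -/
import Mathlib

section
/- Let F, G : C ⥤ Cat be functors and η : F ⟶ G a natural transformation such that for every object c of C the component η_c : F(c) ⥤ G(c) is an equivalence of categories. Then the induced functor ∫η : ∫F → ∫G between Grothendieck constructions (given on objects by (c,x) ↦ (c, η_c(x))) is an equivalence of categories over C. -/
/-!
Over a fixed base morphism `f : c ⟶ c'`, a morphism `(c, x) ⟶ (c', x')` of `∫F` is a morphism
`(F f) x ⟶ x'` of `F c'`, and `∫η` sends it to `η_{c'}` of it, precomposed with the identification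
`(G f) (η_c x) = η_{c'} ((F f) x)` given by naturality. Hence fullness and faithfulness of the
components pass to `∫η`; an object `(c, y)` of `∫G` is isomorphic to the image of
`(c, x)` for any `x` with `η_c x ≅ y`, the isomorphism lying in the fibre over `c`.
-/

open CategoryTheory

namespace CategoryTheory.Grothendieck

variable {C : Type*} [Category C] {F G : C ⥤ Cat} (α : F ⟶ G)

instance faithful_map [∀ c, (α.app c).toFunctor.Faithful] : (map α).Faithful where
  map_injective {X Y} f g hfg := by
    obtain ⟨f, φ⟩ := f
    obtain ⟨g, ψ⟩ := g
    obtain rfl : f = g := congrArg Hom.base hfg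
    have hfiber := Grothendieck.congr hfg
    simp only [map_map_fiber] at hfiber
    erw [eqToHom_trans_assoc, cancel_epi] at hfiber
    exact Grothendieck.ext _ _ rfl (by simpa using (α.app Y.base).toFunctor.map_injective hfiber)

instance full_map [∀ c, (α.app c).toFunctor.Full] : (map α).Full where
  map_surjective {X Y} g := by
    obtain ⟨g, χ⟩ := g
    have hnat := Functor.congr_obj congr(($(α.naturality g)).toFunctor) X.fiber
    refine ⟨⟨g, (α.app Y.base).toFunctor.preimage (eqToHom hnat ≫ χ)⟩, ?_⟩
    refine Grothendieck.ext _ _ rfl ?_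
    simp only [map_map_fiber, Functor.map_preimage]
    erw [eqToHom_trans_assoc, eqToHom_trans_assoc, eqToHom_refl, Category.id_comp]

instance essSurj_map [∀ c, (α.app c).toFunctor.EssSurj] : (map α).EssSurj where
  mem_essImage Y :=
    ⟨⟨Y.base, (α.app Y.base).toFunctor.objPreimage Y.fiber⟩,
      ⟨(ι G Y.base).mapIso ((α.app Y.base).toFunctor.objObjPreimageIso Y.fiber)⟩⟩

instance isEquivalence_map [∀ c, (α.app c).toFunctor.IsEquivalence] :
    (map α).IsEquivalence where

end CategoryTheory.Grothendieck

/-- If `η : F ⟶ G` is a natural transformation of functors `C ⥤ Cat` whose components are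
equivalences of categories, then the induced functor `∫F ⥤ ∫G` on Grothendieck
constructions is an equivalence of categories over `C`. -/
theorem grothendieck_map_equivalence {C : Type*} [Category C] {F G : C ⥤ Cat}
    (η : F ⟶ G) (h : ∀ c : C, (η.app c).toFunctor.IsEquivalence) :
    (Grothendieck.map η).IsEquivalence ∧
      Grothendieck.map η ⋙ Grothendieck.forget G = Grothendieck.forget F :=
  ⟨inferInstance, Grothendieck.functor_comp_forget⟩
end

section
/- Let p : D ⥤ C be a cocartesian fibration of categories and let B be any category. Then the induced functor p_* : Fun(B, D) → Fun(B, C) (postcomposition with p) is a cocartesian fibration, and a natural transformation μ : F ⟶ G between functors B → D is p_*-cocartesian if and only if each component μ_b : F(b) → G(b) is p-cocartesian. -/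
open CategoryTheory

/-- A morphism `α : d₀ ⟶ d₁` is `p`-cocartesian: for every `g : d₀ ⟶ d₂` and every
`h : p d₁ ⟶ p d₂` with `p α ≫ h = p g`, there is a unique `k : d₁ ⟶ d₂` with
`p k = h` and `α ≫ k = g` (equivalently, the square of hom-sets
`Hom(d₁,d₂) → Hom(d₀,d₂)` over `Hom(p d₁, p d₂) → Hom(p d₀, p d₂)` is a pullback). -/
def IsCocart {D : Type*} {C : Type*} [Category D] [Category C] (p : D ⥤ C)
    {d₀ d₁ : D} (α : d₀ ⟶ d₁) : Prop :=
  ∀ ⦃d₂ : D⦄ (g : d₀ ⟶ d₂) (h : p.obj d₁ ⟶ p.obj d₂),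
    p.map α ≫ h = p.map g → ∃! k : d₁ ⟶ d₂, p.map k = h ∧ α ≫ k = g

/-- `p : D ⥤ C` is a cocartesian fibration: every morphism `f : p d₀ ⟶ c` of the base
admits a `p`-cocartesian lift with source `d₀`. -/
def IsCocartFib {D : Type*} {C : Type*} [Category D] [Category C] (p : D ⥤ C) : Prop :=
  ∀ (d₀ : D) ⦃c : C⦄ (f : p.obj d₀ ⟶ c),
    ∃ (d₁ : D) (α : d₀ ⟶ d₁), IsCocart p α ∧ p.IsHomLift f α

/-! Cocartesian lifts in `Fun(B, D)` are built componentwise: choose a `p`-cocartesian lift `α b`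
of each component `f.app b`; the universal property of `α b` then defines the new functor on
morphisms and makes the `α b` natural. A natural transformation with cocartesian components is
cocartesian, since its factorisations can be computed componentwise and are natural by uniqueness.
Conversely, a cocartesian `μ` and the componentwise lift of its image are cocartesian over the
same morphism, hence differ by a natural isomorphism, so each `μ.app b` is a cocartesian morphism
followed by an isomorphism. -/

open Functor

section Morphisms

variable {D C : Type*} [Category D] [Category C] (p : D ⥤ C)

lemma isHomLift_iff_map_eq {d₀ d₁ : D} (f : p.obj d₀ ⟶ p.obj d₁) (α : d₀ ⟶ d₁) :
    p.IsHomLift f α ↔ p.map α = f :=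
  ⟨fun _ => (IsHomLift.eq_of_isHomLift p f α).symm, fun h => h ▸ inferInstance⟩

lemma isCocart_iff_isStronglyCocartesian {R S : C} (f : R ⟶ S) {d₀ d₁ : D} (α : d₀ ⟶ d₁)
    [p.IsHomLift f α] : IsCocart p α ↔ p.IsStronglyCocartesian f α := by
  subst_hom_lift p f α
  constructor
  · intro hα
    refine ⟨fun {d₂} h g _ => ?_⟩
    simpa only [isHomLift_iff_map_eq] using
      hα g h (IsHomLift.eq_of_isHomLift p (p.map α ≫ h) g)
  · intro _ d₂ g h w
    simpa only [isHomLift_iff_map_eq] using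
      IsStronglyCocartesian.universal_property p (p.map α) α h (p.map g) w.symm g

variable {p}

lemma IsCocart.comp_isIso {d₀ d₁ d₂ : D} {α : d₀ ⟶ d₁} (hα : IsCocart p α) (k : d₁ ⟶ d₂)
    [IsIso k] : IsCocart p (α ≫ k) := by
  have := (isCocart_iff_isStronglyCocartesian p (p.map α) α).1 hα
  exact (isCocart_iff_isStronglyCocartesian p (p.map α ≫ p.map k) _).2 inferInstance

end Morphisms

section FunctorCategory

variable {D C B : Type*} [Category D] [Category C] [Category B] (p : D ⥤ C)

lemma isCocart_whiskeringRight_of_app {F G : B ⥤ D} (μ : F ⟶ G)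
    (hμ : ∀ b, IsCocart p (μ.app b)) : IsCocart ((whiskeringRight B D C).obj p) μ := by
  have (b : B) := (isCocart_iff_isStronglyCocartesian p (p.map (μ.app b)) _).1 (hμ b)
  intro H ν η w
  have wb (b : B) : p.map (ν.app b) = p.map (μ.app b) ≫ η.app b := (congr_app w b).symm
  let κ : G ⟶ H :=
    { app b := IsStronglyCocartesian.map p (p.map (μ.app b)) (μ.app b) (wb b) (ν.app b)
      naturality b b' g := by
        have : p.IsHomLift (η.app b ≫ p.map (H.map g)) (G.map g ≫
            IsStronglyCocartesian.map p (p.map (μ.app b')) (μ.app b') (wb b') (ν.app b')) := by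
          have hη : p.map (G.map g) ≫ η.app b' = η.app b ≫ p.map (H.map g) := η.naturality g
          rw [← hη]
          infer_instance
        refine IsStronglyCocartesian.ext p (p.map (μ.app b)) (μ.app b)
          (η.app b ≫ p.map (H.map g)) ?_
        rw [← μ.naturality_assoc, IsStronglyCocartesian.fac_assoc, IsStronglyCocartesian.fac,
          ν.naturality] }
  refine ⟨κ, ⟨?_, ?_⟩, fun κ' ⟨hκ'₁, hκ'₂⟩ => ?_⟩
  · ext b
    exact (IsHomLift.eq_of_isHomLift p (η.app b) (κ.app b)).symm
  · ext b
    exact IsStronglyCocartesian.fac p (p.map (μ.app b)) (μ.app b) (wb b) (ν.app b)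
  · ext b
    have := (isHomLift_iff_map_eq p (η.app b) (κ'.app b)).2 (congr_app hκ'₁ b)
    exact IsStronglyCocartesian.map_uniq p (p.map (μ.app b)) (μ.app b) (wb b) (ν.app b) _
      (congr_app hκ'₂ b)

section Lift

variable {F : B ⥤ D} {K : B ⥤ C} (f : F ⋙ p ⟶ K) {d : B → D} (α : ∀ b, F.obj b ⟶ d b)
  [∀ b, p.IsStronglyCocartesian (f.app b) (α b)]

noncomputable def cocartesianLiftMap {b b' : B} (g : b ⟶ b') : d b ⟶ d b' :=
  IsStronglyCocartesian.map p (f.app b) (α b) (f' := p.map (F.map g) ≫ f.app b')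
    (f.naturality g) (F.map g ≫ α b')

instance isHomLift_cocartesianLiftMap {b b' : B} (g : b ⟶ b') :
    p.IsHomLift (K.map g) (cocartesianLiftMap p f α g) :=
  IsStronglyCocartesian.map_isHomLift ..

lemma comp_cocartesianLiftMap {b b' : B} (g : b ⟶ b') :
    α b ≫ cocartesianLiftMap p f α g = F.map g ≫ α b' :=
  IsStronglyCocartesian.fac ..

lemma cocartesianLiftMap_eq {b b' : B} (g : b ⟶ b') (k : d b ⟶ d b') [p.IsHomLift (K.map g) k]
    (hk : α b ≫ k = F.map g ≫ α b') : cocartesianLiftMap p f α g = k :=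
  (IsStronglyCocartesian.map_uniq p (f.app b) (α b) _ _ k hk).symm

noncomputable def cocartesianLiftFunctor : B ⥤ D where
  obj := d
  map := cocartesianLiftMap p f α
  map_id b := by
    have : p.IsHomLift (K.map (𝟙 b)) (𝟙 (d b)) := by
      rw [K.map_id]
      exact IsHomLift.id (IsHomLift.codomain_eq p (f.app b) (α b))
    exact cocartesianLiftMap_eq p f α _ _ (by simp)
  map_comp g g' := by
    have : p.IsHomLift (K.map (g ≫ g'))
        (cocartesianLiftMap p f α g ≫ cocartesianLiftMap p f α g') := by
      rw [K.map_comp]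
      infer_instance
    refine cocartesianLiftMap_eq p f α _ _ ?_
    rw [← Category.assoc, comp_cocartesianLiftMap, Category.assoc, comp_cocartesianLiftMap,
      F.map_comp, Category.assoc]

lemma cocartesianLiftFunctor_comp : cocartesianLiftFunctor p f α ⋙ p = K :=
  CategoryTheory.Functor.ext (fun b => (IsHomLift.codomain_eq p (f.app b) (α b) :))
    (fun _ _ g => IsHomLift.fac' p (K.map g) (cocartesianLiftMap p f α g))

@[simps]
noncomputable def toCocartesianLiftFunctor : F ⟶ cocartesianLiftFunctor p f α where
  app := α
  naturality _ _ g := (comp_cocartesianLiftMap p f α g).symm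

instance isHomLift_toCocartesianLiftFunctor :
    ((whiskeringRight B D C).obj p).IsHomLift f (toCocartesianLiftFunctor p f α) := by
  refine IsHomLift.of_fac' _ _ _ rfl (cocartesianLiftFunctor_comp p f α) ?_
  ext b
  simp only [whiskeringRight_obj_map, whiskerRight_app, toCocartesianLiftFunctor_app,
    NatTrans.comp_app, eqToHom_app]
  exact IsHomLift.fac' p (f.app b) (α b)

end Lift

variable {p}

lemma IsCocartFib.exists_isHomLift_whiskeringRight (hp : IsCocartFib p) {F : B ⥤ D} {K : B ⥤ C}
    (f : F ⋙ p ⟶ K) : ∃ (L : B ⥤ D) (β : F ⟶ L), (∀ b, IsCocart p (β.app b)) ∧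
      ((whiskeringRight B D C).obj p).IsHomLift f β := by
  choose d α hα hαf using fun b => hp (F.obj b) (f.app b)
  have (b : B) := (isCocart_iff_isStronglyCocartesian p (f.app b) (α b)).1 (hα b)
  exact ⟨_, toCocartesianLiftFunctor p f α, hα, inferInstance⟩

lemma IsCocartFib.whiskeringRight (hp : IsCocartFib p) :
    IsCocartFib ((whiskeringRight B D C).obj p) := fun _ _ f =>
  have ⟨L, β, hβ, hβf⟩ := hp.exists_isHomLift_whiskeringRight f
  ⟨L, β, isCocart_whiskeringRight_of_app p β hβ, hβf⟩

lemma IsCocart.app_of_whiskeringRight (hp : IsCocartFib p) {F G : B ⥤ D} {μ : F ⟶ G}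
    (hμ : IsCocart ((whiskeringRight B D C).obj p) μ) (b : B) : IsCocart p (μ.app b) := by
  let p' := (whiskeringRight B D C).obj p
  obtain ⟨L, β, hβ, _⟩ := hp.exists_isHomLift_whiskeringRight (K := G ⋙ p) (p'.map μ)
  have := (isCocart_iff_isStronglyCocartesian p' (p'.map μ) β).1
    (isCocart_whiskeringRight_of_app p β hβ)
  have := (isCocart_iff_isStronglyCocartesian p' (p'.map μ) μ).1 hμ
  let e := IsCocartesian.codomainUniqueUpToIso p' (p'.map μ) β μ
  have hβe : μ.app b = β.app b ≫ e.hom.app b :=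
    (congr_app (IsCocartesian.fac p' (p'.map μ) β μ) b).symm
  rw [hβe]
  exact (hβ b).comp_isIso _

end FunctorCategory

/-- If `p : D ⥤ C` is a cocartesian fibration, then so is the induced functor
`Fun(B,D) ⥤ Fun(B,C)` of postcomposition with `p`; moreover a natural transformation is
cocartesian for it iff all its components are `p`-cocartesian. -/
theorem functorCat_isCocartFib {D C : Type*} [Category D] [Category C] (p : D ⥤ C)
    (hp : IsCocartFib p) (B : Type*) [Category B] :
    IsCocartFib ((Functor.whiskeringRight B D C).obj p) ∧
      ∀ {F G : B ⥤ D} (μ : F ⟶ G),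
        IsCocart ((Functor.whiskeringRight B D C).obj p) μ ↔
          ∀ b : B, IsCocart p (μ.app b) :=
  ⟨hp.whiskeringRight, fun μ =>
    ⟨fun hμ => hμ.app_of_whiskeringRight hp, isCocart_whiskeringRight_of_app p μ⟩⟩
end
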